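/- arXiv:1707.04246 — 2 statements merged into one kernel-verified Lean document; each statement's English description precedes it below -/
import Mathlib

section
/- Let β = ‖C₀‖·‖A‖·‖(Γ + AC₀A*)⁻¹‖·‖M‖ and suppose 0 ≤ δ < 1/β. Let C(δ) be the unique bounded self-adjoint non-negative fixed point of F(·,δ), define the covariance iterates C₀(δ) = C₀, C_{ℓ+1}(δ) = F(C_ℓ(δ),δ), the mean iterates m₀(δ) = m₀, m_{ℓ+1}(δ) = m₀ + K(C_ℓ(δ),δ)(b − Am₀ − δ M m_ℓ(δ)), and the limiting affine map G(m,δ) = m₀ + K(C(δ),δ)(b − Am₀ − δ M m). Then there exists a unique m(δ) ∈ X with m(δ) = G(m(δ),δ), and there is a constant α₂ > 0 such that ‖m_ℓ(δ) − m(δ)‖ ≤ α₂ (βδ)^ℓ for all ℓ ≥ 1; in particular the sequence of means converges geometrically fast. -/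
open ContinuousLinearMap
open scoped RealInnerProductSpace

/-- The operator `K(B,δ) = C₀ A* (Γ + δ² M B M* + A C₀ A*)⁻¹ : Y → X`. -/
noncomputable def Kop {X Y : Type*}
    [NormedAddCommGroup X] [InnerProductSpace ℝ X] [CompleteSpace X]
    [NormedAddCommGroup Y] [InnerProductSpace ℝ Y] [FiniteDimensional ℝ Y]
    (A M : X →L[ℝ] Y) (C₀ : X →L[ℝ] X) (Γ : Y →L[ℝ] Y)
    (B : X →L[ℝ] X) (δ : ℝ) : Y →L[ℝ] X :=
  C₀ ∘L (adjoint A) ∘L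
    Ring.inverse (Γ + δ ^ 2 • (M ∘L B ∘L adjoint M) + A ∘L C₀ ∘L adjoint A)

/-- The map `F(B,δ) = C₀ − K(B,δ) A C₀`. -/
noncomputable def Fop {X Y : Type*}
    [NormedAddCommGroup X] [InnerProductSpace ℝ X] [CompleteSpace X]
    [NormedAddCommGroup Y] [InnerProductSpace ℝ Y] [FiniteDimensional ℝ Y]
    (A M : X →L[ℝ] Y) (C₀ : X →L[ℝ] X) (Γ : Y →L[ℝ] Y)
    (B : X →L[ℝ] X) (δ : ℝ) : X →L[ℝ] X :=
  C₀ - (Kop A M C₀ Γ B δ) ∘L A ∘L C₀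

/-- The covariance iterates `C₀(δ) = C₀`, `C_{ℓ+1}(δ) = F(C_ℓ(δ),δ)`. -/
noncomputable def covIter {X Y : Type*}
    [NormedAddCommGroup X] [InnerProductSpace ℝ X] [CompleteSpace X]
    [NormedAddCommGroup Y] [InnerProductSpace ℝ Y] [FiniteDimensional ℝ Y]
    (A M : X →L[ℝ] Y) (C₀ : X →L[ℝ] X) (Γ : Y →L[ℝ] Y) (δ : ℝ) : ℕ → (X →L[ℝ] X)
  | 0 => C₀
  | (n + 1) => Fop A M C₀ Γ (covIter A M C₀ Γ δ n) δ

/-- The mean iterates `m₀(δ) = m₀`, `m_{ℓ+1}(δ) = m₀ + K(C_ℓ(δ),δ)(b − A m₀ − δ M m_ℓ(δ))`. -/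
noncomputable def meanIter {X Y : Type*}
    [NormedAddCommGroup X] [InnerProductSpace ℝ X] [CompleteSpace X]
    [NormedAddCommGroup Y] [InnerProductSpace ℝ Y] [FiniteDimensional ℝ Y]
    (A M : X →L[ℝ] Y) (C₀ : X →L[ℝ] X) (Γ : Y →L[ℝ] Y)
    (m₀ : X) (b : Y) (δ : ℝ) : ℕ → X
  | 0 => m₀
  | (n + 1) => m₀ + (Kop A M C₀ Γ (covIter A M C₀ Γ δ n) δ)
      (b - A m₀ - δ • M (meanIter A M C₀ Γ m₀ b δ n))

/-!
For positive `B`, the operator `S(B, δ) = Γ + δ² M B M* + A C₀ A*` inverted in the gain dominates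
`S₀ = Γ + A C₀ A*`, so `‖S(B, δ)⁻¹‖ ≤ ‖S₀⁻¹‖` and `‖K(B, δ)‖ ‖M‖ ≤ β`. The resolvent identity
`S⁻¹ - S'⁻¹ = S⁻¹ (S' - S) S'⁻¹` makes `B ↦ K(B, δ)` Lipschitz with a factor `δ²`, hence `F(·, δ)`
contracts positive operators by `(βδ)²` and `‖C_ℓ - C‖ ≤ (βδ)^(2ℓ) ‖C₀ - C‖`; positivity of the
iterates `C_ℓ` is positivity of a Schur complement. The map `G(·, δ)` is a contraction with rate
`βδ`, which gives the fixed point `m`, and splitting `m_{ℓ+1} - m` into a change of the argument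
and a change of the gain gives `e_{ℓ+1} ≤ βδ (e_ℓ + c (βδ)^(2ℓ))` for `e_ℓ = ‖m_ℓ - m‖`, which
sums to `e_ℓ ≤ α (βδ)^ℓ`.
-/

theorem exists_pos_le_mul_pow_of_le_mul_add {q c : ℝ} {e : ℕ → ℝ} (hq0 : 0 ≤ q) (hq1 : q < 1)
    (hc : 0 ≤ c) (he : ∀ n, e (n + 1) ≤ q * (e n + c * q ^ (2 * n))) :
    ∃ α > 0, ∀ n, e n ≤ α * q ^ n := by
  have hsum : ∀ n, e n ≤ q ^ n * (e 0 + c * ∑ j ∈ Finset.range n, q ^ j) := by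
    intro n
    induction n with
    | zero => simp
    | succ n ih =>
      calc e (n + 1) ≤ q * (q ^ n * (e 0 + c * ∑ j ∈ Finset.range n, q ^ j)
            + c * q ^ (2 * n)) := (he n).trans (by gcongr)
        _ = q ^ (n + 1) * (e 0 + c * ∑ j ∈ Finset.range (n + 1), q ^ j) := by
          rw [Finset.sum_range_succ]; ring
  have h1q : 0 < 1 - q := sub_pos.2 hq1
  refine ⟨|e 0| + c / (1 - q) + 1, by positivity, fun n => (hsum n).trans ?_⟩
  have hgeom : ∑ j ∈ Finset.range n, q ^ j ≤ 1 / (1 - q) := by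
    simpa using geom_sum_Ico_le_of_lt_one (m := 0) (n := n) hq0 hq1
  rw [mul_comm]
  refine mul_le_mul_of_nonneg_right ?_ (pow_nonneg hq0 n)
  calc e 0 + c * ∑ j ∈ Finset.range n, q ^ j ≤ |e 0| + c * (1 / (1 - q)) := by
        gcongr; exact le_abs_self _
    _ ≤ |e 0| + c / (1 - q) + 1 := by rw [mul_one_div]; linarith

namespace ContinuousLinearMap

section NormedSpace

variable {𝕜 : Type*} [NontriviallyNormedField 𝕜] {E F G H : Type*} [NormedAddCommGroup E]
  [NormedSpace 𝕜 E] [NormedAddCommGroup F] [NormedSpace 𝕜 F] [NormedAddCommGroup G]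
  [NormedSpace 𝕜 G] [NormedAddCommGroup H] [NormedSpace 𝕜 H]

theorem opNorm_comp_comp_le (f : G →L[𝕜] H) (g : F →L[𝕜] G) (h : E →L[𝕜] F) :
    ‖f ∘L g ∘L h‖ ≤ ‖f‖ * ‖g‖ * ‖h‖ := by
  grw [opNorm_comp_le, opNorm_comp_le, mul_assoc]

theorem apply_ringInverse_apply {T : E →L[𝕜] E} (hT : IsUnit T) (y : E) :
    T (Ring.inverse T y) = y := by
  change (T * Ring.inverse T) y = y
  rw [Ring.mul_inverse_cancel T hT]
  rfl

end NormedSpace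

section InnerProductSpace

variable {E : Type*} [NormedAddCommGroup E] [InnerProductSpace ℝ E]

theorem inner_apply_self_le_of_le {T S : E →L[ℝ] E} (hTS : T ≤ S) (x : E) :
    ⟪T x, x⟫ ≤ ⟪S x, x⟫ := by
  have := ((le_def T S).1 hTS).inner_nonneg_left x
  rwa [sub_apply, inner_sub_left, sub_nonneg] at this

theorem IsPositive.inner_sq_le {T : E →L[ℝ] E} (hT : T.IsPositive) (u v : E) :
    ⟪T u, v⟫ ^ 2 ≤ ⟪T u, u⟫ * ⟪T v, v⟫ := by
  have hsymm : ⟪T v, u⟫ = ⟪T u, v⟫ := by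
    rw [hT.inner_left_eq_inner_right, real_inner_comm]
  have hquad : ∀ t : ℝ, 0 ≤ ⟪T v, v⟫ * (t * t) + 2 * ⟪T u, v⟫ * t + ⟪T u, u⟫ := fun t => by
    have := hT.inner_nonneg_left (u + t • v)
    simp only [map_add, map_smul, inner_add_left, inner_add_right, real_inner_smul_left,
      real_inner_smul_right, hsymm] at this
    linarith
  have := discrim_le_zero hquad
  rw [discrim] at this
  linarith

/-- Cauchy–Schwarz for `⟪T ·, ·⟫` at `x` and `T⁻¹ x`. -/
theorem IsPositive.sq_norm_le_norm_ringInverse_mul_inner {T : E →L[ℝ] E} (hT : T.IsPositive)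
    (hTu : IsUnit T) (x : E) : ‖x‖ ^ 2 ≤ ‖Ring.inverse T‖ * ⟪T x, x⟫ := by
  have hcs := hT.inner_sq_le x (Ring.inverse T x)
  rw [hT.inner_left_eq_inner_right, apply_ringInverse_apply hTu, real_inner_self_eq_norm_sq] at hcs
  have hinv : ⟪x, Ring.inverse T x⟫ ≤ ‖Ring.inverse T‖ * ‖x‖ ^ 2 := by
    calc ⟪x, Ring.inverse T x⟫ ≤ ‖x‖ * ‖Ring.inverse T x‖ := real_inner_le_norm _ _
      _ ≤ ‖x‖ * (‖Ring.inverse T‖ * ‖x‖) := by gcongr; exact le_opNorm _ _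
      _ = ‖Ring.inverse T‖ * ‖x‖ ^ 2 := by ring
  rcases eq_or_ne x 0 with rfl | hx
  · simp
  · refine le_of_mul_le_mul_right ?_ (by positivity : 0 < ‖x‖ ^ 2)
    nlinarith [mul_le_mul_of_nonneg_left hinv (hT.inner_nonneg_left x)]

theorem IsPositive.norm_ringInverse_le_of_le {T S : E →L[ℝ] E} (hT : T.IsPositive)
    (hTu : IsUnit T) (hSu : IsUnit S) (hTS : T ≤ S) :
    ‖Ring.inverse S‖ ≤ ‖Ring.inverse T‖ := by
  refine opNorm_le_bound _ (norm_nonneg _) fun y => ?_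
  set x := Ring.inverse S y
  have hx : ‖x‖ ^ 2 ≤ ‖Ring.inverse T‖ * (‖y‖ * ‖x‖) := by
    grw [hT.sq_norm_le_norm_ringInverse_mul_inner hTu, inner_apply_self_le_of_le hTS,
      apply_ringInverse_apply hSu, real_inner_le_norm]
  rcases (norm_nonneg x).eq_or_lt with hx0 | hx0
  · rw [← hx0]; positivity
  · nlinarith

theorem isUnit_of_forall_inner_pos [FiniteDimensional ℝ E] {T : E →L[ℝ] E}
    (hT : ∀ y : E, y ≠ 0 → 0 < ⟪T y, y⟫) : IsUnit T := by
  have hinj : Function.Injective T := by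
    refine (injective_iff_map_eq_zero T).2 fun y hy => ?_
    by_contra hne
    simpa [hy] using hT y hne
  exact isUnit_iff_bijective.2
    ⟨hinj, LinearMap.injective_iff_surjective (f := (T : E →ₗ[ℝ] E)) |>.1 hinj⟩

theorem IsPositive.isUnit_of_le [FiniteDimensional ℝ E] {T S : E →L[ℝ] E} (hT : T.IsPositive)
    (hTu : IsUnit T) (hTS : T ≤ S) : IsUnit S :=
  isUnit_of_forall_inner_pos fun y hy => by
    have h := (hT.sq_norm_le_norm_ringInverse_mul_inner hTu y).trans
      (mul_le_mul_of_nonneg_left (inner_apply_self_le_of_le hTS y) (norm_nonneg _))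
    exact pos_of_mul_pos_right (h.trans_lt' (by positivity)) (norm_nonneg _)

theorem IsPositive.ringInverse [CompleteSpace E] {T : E →L[ℝ] E} (hT : T.IsPositive) :
    (Ring.inverse T).IsPositive := by
  by_cases hTu : IsUnit T
  · refine (isPositive_iff' _).2 ⟨hT.isSelfAdjoint.ringInverse, fun y => ?_⟩
    simpa only [apply_ringInverse_apply hTu, real_inner_comm] using
      hT.inner_nonneg_left (Ring.inverse T y)
  · simpa only [Ring.inverse_non_unit T hTu] using isPositive_zero

end InnerProductSpace

variable {X Y : Type*} [NormedAddCommGroup X] [InnerProductSpace ℝ X] [CompleteSpace X]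
  [NormedAddCommGroup Y] [InnerProductSpace ℝ Y] [CompleteSpace Y]

/-- Positivity of the Schur complement of `S` in the block operator `[[P, P L*], [L P, S]]`. -/
theorem IsPositive.sub_comp_ringInverse_comp {P : X →L[ℝ] X} (hP : P.IsPositive)
    {L : X →L[ℝ] Y} {S : Y →L[ℝ] Y} (hSu : IsUnit S) (hle : L ∘L P ∘L adjoint L ≤ S) :
    (P - (P ∘L adjoint L ∘L Ring.inverse S) ∘L L ∘L P).IsPositive := by
  have hS : S.IsPositive := by simpa using ((le_def _ _).1 hle).add (hP.conj_adjoint L)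
  have hW : ((P ∘L adjoint L ∘L Ring.inverse S) ∘L L ∘L P).IsPositive := by
    have h := hS.ringInverse.conj_adjoint (P ∘L adjoint L)
    rwa [adjoint_comp, adjoint_adjoint, hP.isSelfAdjoint.adjoint_eq] at h
  refine (isPositive_iff _).2 ⟨hP.isSymmetric.sub hW.isSymmetric, fun x => ?_⟩
  set y := Ring.inverse S (L (P x))
  have hSy : S y = L (P x) := apply_ringInverse_apply hSu _
  have hPL : ⟪P (adjoint L y), x⟫ = ⟪S y, y⟫ := by
    rw [hP.inner_left_eq_inner_right, adjoint_inner_left, hSy, real_inner_comm]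
  have hPL' : ⟪P x, adjoint L y⟫ = ⟪S y, y⟫ := by
    rw [hP.inner_left_eq_inner_right, real_inner_comm, hPL]
  have hLPL : ⟪P (adjoint L y), adjoint L y⟫ ≤ ⟪S y, y⟫ := by
    simpa only [comp_apply, ← adjoint_inner_right] using inner_apply_self_le_of_le hle y
  have hq := hP.inner_nonneg_left (x - adjoint L y)
  rw [map_sub, inner_sub_left, inner_sub_right, inner_sub_right] at hq
  change 0 ≤ ⟪P x - P (adjoint L y), x⟫
  rw [inner_sub_left, hPL]
  linarith

end ContinuousLinearMap

section MeanUpdate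

variable {X Y : Type*} [NormedAddCommGroup X] [NormedSpace ℝ X] [NormedAddCommGroup Y]
  [NormedSpace ℝ Y]

/-- The map `G(·, δ)` of the theorem, with the gain `K(C(δ), δ)` replaced by an arbitrary `K`. -/
def meanUpdate (A M : X →L[ℝ] Y) (m₀ : X) (b : Y) (δ : ℝ) (K : Y →L[ℝ] X) (m : X) : X :=
  m₀ + K (b - A m₀ - δ • M m)

variable {A M : X →L[ℝ] Y}

theorem meanUpdate_sub_meanUpdate_of_gain (m₀ : X) (b : Y) (δ : ℝ) (K K' : Y →L[ℝ] X) (m : X) :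
    meanUpdate A M m₀ b δ K m - meanUpdate A M m₀ b δ K' m = (K - K') (b - A m₀ - δ • M m) := by
  simp only [meanUpdate, sub_apply]
  abel

theorem norm_meanUpdate_sub_meanUpdate_le (m₀ : X) (b : Y) (δ : ℝ) (K : Y →L[ℝ] X)
    (m m' : X) :
    ‖meanUpdate A M m₀ b δ K m - meanUpdate A M m₀ b δ K m'‖ ≤ ‖K‖ * ‖M‖ * ‖δ‖ * ‖m - m'‖ := by
  have h : meanUpdate A M m₀ b δ K m - meanUpdate A M m₀ b δ K m' = K (δ • M (m' - m)) := by
    simp only [meanUpdate, map_sub, map_smul, smul_sub]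
    abel
  rw [h, norm_sub_rev m m']
  grw [le_opNorm, norm_smul, le_opNorm]
  exact le_of_eq (by ring)

theorem contractingWith_meanUpdate (m₀ : X) (b : Y) {δ : ℝ} {K : Y →L[ℝ] X}
    (hK : ‖K‖ * ‖M‖ * ‖δ‖ < 1) :
    ContractingWith (‖K‖₊ * ‖M‖₊ * ‖δ‖₊) (meanUpdate A M m₀ b δ K) :=
  ⟨by rw [← NNReal.coe_lt_coe]; simpa using hK,
    LipschitzWith.of_dist_le_mul fun m m' => by
      simpa [dist_eq_norm] using norm_meanUpdate_sub_meanUpdate_le m₀ b δ K m m'⟩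

end MeanUpdate

section Iteration

variable {X Y : Type*} [NormedAddCommGroup X] [InnerProductSpace ℝ X] [CompleteSpace X]
  [NormedAddCommGroup Y] [InnerProductSpace ℝ Y] [FiniteDimensional ℝ Y]

noncomputable def innovCov (A M : X →L[ℝ] Y) (C₀ : X →L[ℝ] X) (Γ : Y →L[ℝ] Y)
    (B : X →L[ℝ] X) (δ : ℝ) : Y →L[ℝ] Y :=
  Γ + δ ^ 2 • (M ∘L B ∘L adjoint M) + A ∘L C₀ ∘L adjoint A

noncomputable def innovCov₀ (A : X →L[ℝ] Y) (C₀ : X →L[ℝ] X) (Γ : Y →L[ℝ] Y) : Y →L[ℝ] Y :=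
  Γ + A ∘L C₀ ∘L adjoint A

noncomputable def contractionConst (A M : X →L[ℝ] Y) (C₀ : X →L[ℝ] X) (Γ : Y →L[ℝ] Y) : ℝ :=
  ‖C₀‖ * ‖A‖ * ‖Ring.inverse (innovCov₀ A C₀ Γ)‖ * ‖M‖

variable {A M : X →L[ℝ] Y} {C₀ : X →L[ℝ] X} {Γ : Y →L[ℝ] Y}

theorem contractionConst_nonneg : 0 ≤ contractionConst A M C₀ Γ := by
  unfold contractionConst; positivity

theorem Kop_eq (B : X →L[ℝ] X) (δ : ℝ) :
    Kop A M C₀ Γ B δ = C₀ ∘L adjoint A ∘L Ring.inverse (innovCov A M C₀ Γ B δ) := rfl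

theorem isPositive_innovCov₀ (hC₀ : C₀.IsPositive) (hΓ : Γ.IsPositive) :
    (innovCov₀ A C₀ Γ).IsPositive :=
  hΓ.add (hC₀.conj_adjoint A)

theorem isUnit_innovCov₀ (hC₀ : C₀.IsPositive) (hΓ : Γ.IsPositive)
    (hΓpos : ∀ y : Y, y ≠ 0 → 0 < ⟪Γ y, y⟫) : IsUnit (innovCov₀ A C₀ Γ) :=
  hΓ.isUnit_of_le (isUnit_of_forall_inner_pos hΓpos) <| by
    rw [le_def, innovCov₀, add_sub_cancel_left]
    exact hC₀.conj_adjoint A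

theorem innovCov₀_le_innovCov {B : X →L[ℝ] X} (hB : B.IsPositive) (δ : ℝ) :
    innovCov₀ A C₀ Γ ≤ innovCov A M C₀ Γ B δ := by
  rw [le_def, innovCov, innovCov₀, add_right_comm, add_sub_cancel_left]
  exact (hB.conj_adjoint M).smul_of_nonneg (sq_nonneg δ)

theorem isUnit_innovCov (hC₀ : C₀.IsPositive) (hΓ : Γ.IsPositive)
    (hΓpos : ∀ y : Y, y ≠ 0 → 0 < ⟪Γ y, y⟫) {B : X →L[ℝ] X} (hB : B.IsPositive) (δ : ℝ) :
    IsUnit (innovCov A M C₀ Γ B δ) :=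
  (isPositive_innovCov₀ hC₀ hΓ).isUnit_of_le (isUnit_innovCov₀ hC₀ hΓ hΓpos)
    (innovCov₀_le_innovCov hB δ)

theorem norm_ringInverse_innovCov_le (hC₀ : C₀.IsPositive) (hΓ : Γ.IsPositive)
    (hΓpos : ∀ y : Y, y ≠ 0 → 0 < ⟪Γ y, y⟫) {B : X →L[ℝ] X} (hB : B.IsPositive) (δ : ℝ) :
    ‖Ring.inverse (innovCov A M C₀ Γ B δ)‖ ≤ ‖Ring.inverse (innovCov₀ A C₀ Γ)‖ :=
  (isPositive_innovCov₀ hC₀ hΓ).norm_ringInverse_le_of_le (isUnit_innovCov₀ hC₀ hΓ hΓpos)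
    (isUnit_innovCov hC₀ hΓ hΓpos hB δ) (innovCov₀_le_innovCov hB δ)

theorem norm_Kop_mul_norm_le (hC₀ : C₀.IsPositive) (hΓ : Γ.IsPositive)
    (hΓpos : ∀ y : Y, y ≠ 0 → 0 < ⟪Γ y, y⟫) {B : X →L[ℝ] X} (hB : B.IsPositive) (δ : ℝ) :
    ‖Kop A M C₀ Γ B δ‖ * ‖M‖ ≤ contractionConst A M C₀ Γ := by
  grw [Kop_eq, opNorm_comp_comp_le, adjoint.norm_map,
    norm_ringInverse_innovCov_le hC₀ hΓ hΓpos hB δ, contractionConst]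

theorem norm_Kop_sub_Kop_le (hC₀ : C₀.IsPositive) (hΓ : Γ.IsPositive)
    (hΓpos : ∀ y : Y, y ≠ 0 → 0 < ⟪Γ y, y⟫) {B B' : X →L[ℝ] X} (hB : B.IsPositive)
    (hB' : B'.IsPositive) (δ : ℝ) :
    ‖Kop A M C₀ Γ B δ - Kop A M C₀ Γ B' δ‖ ≤ contractionConst A M C₀ Γ * δ ^ 2 * ‖M‖ *
      ‖Ring.inverse (innovCov₀ A C₀ Γ)‖ * ‖B - B'‖ := by
  have hdiff : innovCov A M C₀ Γ B' δ - innovCov A M C₀ Γ B δ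
      = δ ^ 2 • (M ∘L (B' - B) ∘L adjoint M) := by
    simp only [innovCov, sub_comp, comp_sub, smul_sub]
    abel
  have hinv := Ring.inverse_sub_inverse (a := innovCov A M C₀ Γ B δ)
    (b := innovCov A M C₀ Γ B' δ)
    (iff_of_true (isUnit_innovCov hC₀ hΓ hΓpos hB δ) (isUnit_innovCov hC₀ hΓ hΓpos hB' δ))
  rw [hdiff] at hinv
  rw [Kop_eq, Kop_eq, ← comp_sub, ← comp_sub, hinv]
  grw [opNorm_comp_comp_le, norm_mul_le, norm_mul_le, norm_smul, opNorm_comp_comp_le,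
    norm_ringInverse_innovCov_le hC₀ hΓ hΓpos hB δ, norm_ringInverse_innovCov_le hC₀ hΓ hΓpos hB' δ]
  exact le_of_eq (by
    rw [adjoint.norm_map, adjoint.norm_map, norm_sub_rev, Real.norm_of_nonneg (sq_nonneg δ),
      contractionConst]
    ring)

theorem isPositive_Fop (hC₀ : C₀.IsPositive) (hΓ : Γ.IsPositive)
    (hΓpos : ∀ y : Y, y ≠ 0 → 0 < ⟪Γ y, y⟫) {B : X →L[ℝ] X} (hB : B.IsPositive) (δ : ℝ) :
    (Fop A M C₀ Γ B δ).IsPositive :=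
  hC₀.sub_comp_ringInverse_comp (isUnit_innovCov hC₀ hΓ hΓpos hB δ) <| by
    rw [le_def, add_sub_cancel_right]
    exact hΓ.add ((hB.conj_adjoint M).smul_of_nonneg (sq_nonneg δ))

theorem Fop_sub_Fop (B B' : X →L[ℝ] X) (δ : ℝ) :
    Fop A M C₀ Γ B δ - Fop A M C₀ Γ B' δ
      = (Kop A M C₀ Γ B' δ - Kop A M C₀ Γ B δ) ∘L A ∘L C₀ := by
  simp only [Fop, sub_comp]
  abel

theorem norm_Fop_sub_Fop_le (hC₀ : C₀.IsPositive) (hΓ : Γ.IsPositive)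
    (hΓpos : ∀ y : Y, y ≠ 0 → 0 < ⟪Γ y, y⟫) {B B' : X →L[ℝ] X} (hB : B.IsPositive)
    (hB' : B'.IsPositive) (δ : ℝ) :
    ‖Fop A M C₀ Γ B δ - Fop A M C₀ Γ B' δ‖
      ≤ (contractionConst A M C₀ Γ * δ) ^ 2 * ‖B - B'‖ := by
  rw [Fop_sub_Fop]
  grw [opNorm_comp_comp_le, norm_Kop_sub_Kop_le hC₀ hΓ hΓpos hB' hB δ, norm_sub_rev B' B]
  exact le_of_eq (by rw [contractionConst]; ring)

theorem isPositive_covIter (hC₀ : C₀.IsPositive) (hΓ : Γ.IsPositive)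
    (hΓpos : ∀ y : Y, y ≠ 0 → 0 < ⟪Γ y, y⟫) (δ : ℝ) :
    ∀ n, (covIter A M C₀ Γ δ n).IsPositive
  | 0 => hC₀
  | n + 1 => isPositive_Fop hC₀ hΓ hΓpos (isPositive_covIter hC₀ hΓ hΓpos δ n) δ

theorem norm_covIter_sub_le (hC₀ : C₀.IsPositive) (hΓ : Γ.IsPositive)
    (hΓpos : ∀ y : Y, y ≠ 0 → 0 < ⟪Γ y, y⟫) {δ : ℝ} {C : X →L[ℝ] X} (hC : C.IsPositive)
    (hCfix : Fop A M C₀ Γ C δ = C) (n : ℕ) :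
    ‖covIter A M C₀ Γ δ n - C‖ ≤ (contractionConst A M C₀ Γ * δ) ^ (2 * n) * ‖C₀ - C‖ := by
  induction n with
  | zero => simp [covIter]
  | succ n ih =>
    calc ‖covIter A M C₀ Γ δ (n + 1) - C‖
        = ‖Fop A M C₀ Γ (covIter A M C₀ Γ δ n) δ - Fop A M C₀ Γ C δ‖ := by rw [hCfix]; rfl
      _ ≤ (contractionConst A M C₀ Γ * δ) ^ 2 * ‖covIter A M C₀ Γ δ n - C‖ :=
        norm_Fop_sub_Fop_le hC₀ hΓ hΓpos (isPositive_covIter hC₀ hΓ hΓpos δ n) hC δ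
      _ ≤ (contractionConst A M C₀ Γ * δ) ^ 2
          * ((contractionConst A M C₀ Γ * δ) ^ (2 * n) * ‖C₀ - C‖) := by gcongr
      _ = _ := by ring

theorem meanIter_succ (m₀ : X) (b : Y) (δ : ℝ) (n : ℕ) :
    meanIter A M C₀ Γ m₀ b δ (n + 1) = meanUpdate A M m₀ b δ
      (Kop A M C₀ Γ (covIter A M C₀ Γ δ n) δ) (meanIter A M C₀ Γ m₀ b δ n) := rfl

theorem norm_meanIter_succ_sub_le (hC₀ : C₀.IsPositive) (hΓ : Γ.IsPositive)
    (hΓpos : ∀ y : Y, y ≠ 0 → 0 < ⟪Γ y, y⟫) {m₀ : X} {b : Y} {δ : ℝ} (hδ : 0 ≤ δ)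
    {C : X →L[ℝ] X} (hC : C.IsPositive) (hCfix : Fop A M C₀ Γ C δ = C) {m : X}
    (hm : m = meanUpdate A M m₀ b δ (Kop A M C₀ Γ C δ) m) (n : ℕ) :
    ‖meanIter A M C₀ Γ m₀ b δ (n + 1) - m‖
      ≤ contractionConst A M C₀ Γ * δ * (‖meanIter A M C₀ Γ m₀ b δ n - m‖
        + δ * (‖M‖ * ‖Ring.inverse (innovCov₀ A C₀ Γ)‖ * ‖b - A m₀ - δ • M m‖
          * ‖C₀ - C‖) * (contractionConst A M C₀ Γ * δ) ^ (2 * n)) := by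
  set Kn := Kop A M C₀ Γ (covIter A M C₀ Γ δ n) δ
  set mn := meanIter A M C₀ Γ m₀ b δ n
  have hsplit : meanIter A M C₀ Γ m₀ b δ (n + 1) - m
      = (meanUpdate A M m₀ b δ Kn mn - meanUpdate A M m₀ b δ Kn m)
        + (meanUpdate A M m₀ b δ Kn m - meanUpdate A M m₀ b δ (Kop A M C₀ Γ C δ) m) := by
    rw [meanIter_succ, sub_add_sub_cancel, ← hm]
  have hCn := isPositive_covIter (A := A) (M := M) hC₀ hΓ hΓpos δ n
  have hβ := contractionConst_nonneg (A := A) (M := M) (C₀ := C₀) (Γ := Γ)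
  rw [hsplit, meanUpdate_sub_meanUpdate_of_gain]
  grw [norm_add_le, norm_meanUpdate_sub_meanUpdate_le, le_opNorm,
    norm_Kop_mul_norm_le hC₀ hΓ hΓpos hCn, norm_Kop_sub_Kop_le hC₀ hΓ hΓpos hCn hC,
    norm_covIter_sub_le hC₀ hΓ hΓpos hC hCfix, Real.norm_of_nonneg hδ]
  exact le_of_eq (by ring)

end Iteration

/-- For `0 ≤ δ < 1/β`, with `C(δ)` the unique self-adjoint non-negative fixed point of
`F(·,δ)` and `G(m,δ) = m₀ + K(C(δ),δ)(b − A m₀ − δ M m)`, there is a unique `m(δ)` with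
`m(δ) = G(m(δ),δ)`, and there is `α₂ > 0` with `‖m_ℓ(δ) − m(δ)‖ ≤ α₂ (βδ)^ℓ` for all
`ℓ ≥ 1`; in particular the means converge geometrically fast. -/
theorem stmt_7 {X Y : Type*}
    [NormedAddCommGroup X] [InnerProductSpace ℝ X] [CompleteSpace X]
    [NormedAddCommGroup Y] [InnerProductSpace ℝ Y] [FiniteDimensional ℝ Y]
    (A M : X →L[ℝ] Y) (C₀ : X →L[ℝ] X) (Γ : Y →L[ℝ] Y)
    (m₀ : X) (b : Y)
    (hC₀ : C₀.IsPositive) (hΓ : Γ.IsPositive)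
    (hΓpos : ∀ y : Y, y ≠ 0 → 0 < ⟪Γ y, y⟫)
    (β : ℝ)
    (hβ : β = ‖C₀‖ * ‖A‖ * ‖Ring.inverse (Γ + A ∘L C₀ ∘L adjoint A)‖ * ‖M‖)
    (δ : ℝ) (hδ0 : 0 ≤ δ) (hδ1 : β * δ < 1)
    (C : X →L[ℝ] X) (hC : C.IsPositive) (hCfix : Fop A M C₀ Γ C δ = C) :
    (∃! m : X, m = m₀ + (Kop A M C₀ Γ C δ) (b - A m₀ - δ • M m)) ∧
      ∀ m : X, m = m₀ + (Kop A M C₀ Γ C δ) (b - A m₀ - δ • M m) →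
        ∃ α₂ > (0 : ℝ), ∀ ℓ : ℕ, 1 ≤ ℓ →
          ‖meanIter A M C₀ Γ m₀ b δ ℓ - m‖ ≤ α₂ * (β * δ) ^ ℓ := by
  obtain rfl : β = contractionConst A M C₀ Γ := hβ
  have hK : ‖Kop A M C₀ Γ C δ‖ * ‖M‖ * ‖δ‖ < 1 := by
    rw [Real.norm_of_nonneg hδ0]
    exact (mul_le_mul_of_nonneg_right (norm_Kop_mul_norm_le hC₀ hΓ hΓpos hC δ) hδ0).trans_lt hδ1
  have hG := contractingWith_meanUpdate (A := A) m₀ b hK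
  have : Nonempty X := ⟨0⟩
  refine ⟨⟨hG.fixedPoint, hG.fixedPoint_isFixedPt.symm, fun m hm => hG.fixedPoint_unique hm.symm⟩,
    fun m hm => ?_⟩
  obtain ⟨α, hα, hle⟩ := exists_pos_le_mul_pow_of_le_mul_add
    (e := fun n => ‖meanIter A M C₀ Γ m₀ b δ n - m‖) (mul_nonneg contractionConst_nonneg hδ0) hδ1
    (mul_nonneg hδ0 (by positivity)) (norm_meanIter_succ_sub_le hC₀ hΓ hΓpos hδ0 hC hCfix hm)
  exact ⟨α, hα, fun ℓ _ => hle ℓ⟩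
end

section
/- Assume κ ≤ π_noise(ε) ≤ κ⁻¹ for all ε ∈ ℝ^J, where κ ∈ (0,1). Then the one-step update of the iterative model-error algorithm is a Lipschitz map on probability measures with constant 2κ⁻³: for all Borel probability measures μ, ν on ℝⁿ, d(LPμ, LPν) ≤ 2κ⁻³ d(μ, ν), where d(μ,ν) = sup{|∫φ dμ − ∫φ dν| : φ : ℝⁿ → ℝ bounded measurable with sup|φ| ≤ 1}. -/
open MeasureTheory

/-- The map `P` of the iterative model-error algorithm:
`(Pμ)(du) = (∫ π_noise(b − f(u) − M(z)) μ(dz)) · π_prior(u) du`. -/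
noncomputable def Pmeas {n J : ℕ}
    (πprior : (Fin n → ℝ) → ℝ) (πnoise : (Fin J → ℝ) → ℝ)
    (f M : (Fin n → ℝ) → (Fin J → ℝ)) (b : Fin J → ℝ)
    (μ : Measure (Fin n → ℝ)) : Measure (Fin n → ℝ) :=
  (volume : Measure (Fin n → ℝ)).withDensity
    (fun u => ENNReal.ofReal ((∫ z, πnoise (b - f u - M z) ∂μ) * πprior u))

/-- The normalization `Lμ = μ / μ(ℝⁿ)`. -/
noncomputable def Lmeas {n : ℕ} (μ : Measure (Fin n → ℝ)) : Measure (Fin n → ℝ) :=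
  (μ Set.univ)⁻¹ • μ

/-- The distance `d(μ,ν) = sup {|μ(φ) − ν(φ)| : φ bounded measurable, sup|φ| ≤ 1}`. -/
noncomputable def dmeas {α : Type*} [MeasurableSpace α] (μ ν : Measure α) : ℝ :=
  sSup {r : ℝ | ∃ φ : α → ℝ, Measurable φ ∧ (∀ x, |φ x| ≤ 1) ∧
    r = |(∫ x, φ x ∂μ) - ∫ x, φ x ∂ν|}

section Helpers

variable {α : Type*} [MeasurableSpace α]

lemma abs_integral_le_one (ρ : Measure α) [IsProbabilityMeasure ρ]
    (φ : α → ℝ) (hm : Measurable φ) (hb : ∀ x, |φ x| ≤ 1) :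
    |∫ x, φ x ∂ρ| ≤ 1 := by
  have hint : Integrable φ ρ := by
    refine Integrable.mono' (integrable_const 1) hm.aestronglyMeasurable ?_
    exact Filter.Eventually.of_forall fun x => by simpa only [Real.norm_eq_abs] using hb x
  calc |∫ x, φ x ∂ρ| ≤ ∫ x, |φ x| ∂ρ := by
        simpa only [Real.norm_eq_abs] using norm_integral_le_integral_norm (μ := ρ) φ
    _ ≤ ∫ _x, (1 : ℝ) ∂ρ := integral_mono hint.abs (integrable_const 1) (fun x => hb x)
    _ = 1 := by simp

lemma dmeas_bddAbove (μ ν : Measure α) [IsProbabilityMeasure μ] [IsProbabilityMeasure ν] :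
    BddAbove {r : ℝ | ∃ φ : α → ℝ, Measurable φ ∧ (∀ x, |φ x| ≤ 1) ∧
      r = |(∫ x, φ x ∂μ) - ∫ x, φ x ∂ν|} := by
  refine ⟨2, ?_⟩
  rintro r ⟨φ, hm, hb, rfl⟩
  calc |(∫ x, φ x ∂μ) - ∫ x, φ x ∂ν| ≤ |∫ x, φ x ∂μ| + |∫ x, φ x ∂ν| := abs_sub _ _
    _ ≤ 2 := by linarith [abs_integral_le_one μ φ hm hb, abs_integral_le_one ν φ hm hb]

lemma dmeas_ge (μ ν : Measure α) [IsProbabilityMeasure μ] [IsProbabilityMeasure ν]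
    (φ : α → ℝ) (hm : Measurable φ) (hb : ∀ x, |φ x| ≤ 1) :
    |(∫ x, φ x ∂μ) - ∫ x, φ x ∂ν| ≤ dmeas μ ν :=
  le_csSup (dmeas_bddAbove μ ν) ⟨φ, hm, hb, rfl⟩

lemma dmeas_nonneg (μ ν : Measure α) [IsProbabilityMeasure μ] [IsProbabilityMeasure ν] :
    0 ≤ dmeas μ ν := by
  have := dmeas_ge μ ν (fun _ => 0) measurable_const (fun x => by simp)
  simpa using this.trans' (by simp)

end Helpers

section Main

variable {n J : ℕ}

lemma prior_integrable (πprior : (Fin n → ℝ) → ℝ) (hprior_meas : Measurable πprior)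
    (hprior_nonneg : ∀ u, 0 ≤ πprior u)
    (hprior_int : ∫⁻ u, ENNReal.ofReal (πprior u) = 1) :
    Integrable πprior (volume : Measure (Fin n → ℝ)) := by
  refine ⟨hprior_meas.aestronglyMeasurable, ?_⟩
  rw [hasFiniteIntegral_iff_ofReal (Filter.Eventually.of_forall hprior_nonneg), hprior_int]
  exact ENNReal.one_lt_top

lemma prior_integral_one (πprior : (Fin n → ℝ) → ℝ) (hprior_meas : Measurable πprior)
    (hprior_nonneg : ∀ u, 0 ≤ πprior u)
    (hprior_int : ∫⁻ u, ENNReal.ofReal (πprior u) = 1) :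
    ∫ u, πprior u = 1 := by
  have h := ofReal_integral_eq_lintegral_ofReal
    (prior_integrable πprior hprior_meas hprior_nonneg hprior_int)
    (Filter.Eventually.of_forall hprior_nonneg)
  rw [hprior_int] at h
  exact ENNReal.ofReal_eq_one.mp h

lemma weighted_integrable (πprior : (Fin n → ℝ) → ℝ) (hprior_meas : Measurable πprior)
    (hprior_nonneg : ∀ u, 0 ≤ πprior u)
    (hprior_int : ∫⁻ u, ENNReal.ofReal (πprior u) = 1)
    (χ : (Fin n → ℝ) → ℝ) (hχ : Measurable χ) (C : ℝ) (hb : ∀ u, |χ u| ≤ C) :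
    Integrable (fun u => χ u * πprior u) (volume : Measure (Fin n → ℝ)) := by
  refine Integrable.mono'
    ((prior_integrable πprior hprior_meas hprior_nonneg hprior_int).const_mul C)
    ((hχ.mul hprior_meas).aestronglyMeasurable) ?_
  refine Filter.Eventually.of_forall fun u => ?_
  rw [Real.norm_eq_abs, abs_mul, abs_of_nonneg (hprior_nonneg u)]
  exact mul_le_mul_of_nonneg_right (hb u) (hprior_nonneg u)

lemma g_measurable (πnoise : (Fin J → ℝ) → ℝ) (hnoise_meas : Measurable πnoise)
    (f M : (Fin n → ℝ) → (Fin J → ℝ)) (hf : Measurable f) (hM : Measurable M)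
    (b : Fin J → ℝ) (ρ : Measure (Fin n → ℝ)) [SFinite ρ] :
    Measurable (fun u => ∫ z, πnoise (b - f u - M z) ∂ρ) := by
  have h : StronglyMeasurable (fun p : (Fin n → ℝ) × (Fin n → ℝ) =>
      πnoise (b - f p.1 - M p.2)) :=
    (hnoise_meas.comp (((measurable_const.sub (hf.comp measurable_fst)).sub
      (hM.comp measurable_snd)))).stronglyMeasurable
  exact h.integral_prod_right'.measurable

lemma hu_integrable (κ : ℝ) (hκ0 : 0 < κ)
    (πnoise : (Fin J → ℝ) → ℝ) (hnoise_meas : Measurable πnoise)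
    (hnoise_bnd : ∀ ε, κ ≤ πnoise ε ∧ πnoise ε ≤ κ⁻¹)
    (f M : (Fin n → ℝ) → (Fin J → ℝ)) (hM : Measurable M)
    (b : Fin J → ℝ) (ρ : Measure (Fin n → ℝ)) [IsProbabilityMeasure ρ]
    (u : Fin n → ℝ) :
    Integrable (fun z => πnoise (b - f u - M z)) ρ := by
  refine Integrable.mono' (integrable_const κ⁻¹)
    ((hnoise_meas.comp (measurable_const.sub hM)).aestronglyMeasurable) ?_
  refine Filter.Eventually.of_forall fun z => ?_
  rw [Real.norm_eq_abs, abs_of_nonneg (le_trans hκ0.le (hnoise_bnd _).1)]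
  exact (hnoise_bnd _).2

lemma g_bounds (κ : ℝ) (hκ0 : 0 < κ)
    (πnoise : (Fin J → ℝ) → ℝ) (hnoise_meas : Measurable πnoise)
    (hnoise_bnd : ∀ ε, κ ≤ πnoise ε ∧ πnoise ε ≤ κ⁻¹)
    (f M : (Fin n → ℝ) → (Fin J → ℝ)) (hM : Measurable M)
    (b : Fin J → ℝ) (ρ : Measure (Fin n → ℝ)) [IsProbabilityMeasure ρ]
    (u : Fin n → ℝ) :
    κ ≤ (∫ z, πnoise (b - f u - M z) ∂ρ) ∧ (∫ z, πnoise (b - f u - M z) ∂ρ) ≤ κ⁻¹ := by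
  have hint := hu_integrable κ hκ0 πnoise hnoise_meas hnoise_bnd f M hM b ρ u
  constructor
  · calc κ = ∫ _z, κ ∂ρ := by simp
      _ ≤ _ := integral_mono (integrable_const κ) hint (fun z => (hnoise_bnd _).1)
  · calc (∫ z, πnoise (b - f u - M z) ∂ρ) ≤ ∫ _z, κ⁻¹ ∂ρ :=
        integral_mono hint (integrable_const κ⁻¹) (fun z => (hnoise_bnd _).2)
      _ = κ⁻¹ := by simp

/-- Representation of the integral of a test function against `L (P ρ)`. -/
lemma rep (κ : ℝ) (hκ0 : 0 < κ)
    (πprior : (Fin n → ℝ) → ℝ) (hprior_meas : Measurable πprior)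
    (hprior_nonneg : ∀ u, 0 ≤ πprior u)
    (hprior_int : ∫⁻ u, ENNReal.ofReal (πprior u) = 1)
    (πnoise : (Fin J → ℝ) → ℝ) (hnoise_meas : Measurable πnoise)
    (hnoise_bnd : ∀ ε, κ ≤ πnoise ε ∧ πnoise ε ≤ κ⁻¹)
    (f M : (Fin n → ℝ) → (Fin J → ℝ)) (hf : Measurable f) (hM : Measurable M)
    (b : Fin J → ℝ) (ρ : Measure (Fin n → ℝ)) [IsProbabilityMeasure ρ]
    (φ : (Fin n → ℝ) → ℝ) :
    ∫ x, φ x ∂(Lmeas (Pmeas πprior πnoise f M b ρ)) =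
      (∫ u, (∫ z, πnoise (b - f u - M z) ∂ρ) * πprior u)⁻¹ *
        ∫ u, ((∫ z, πnoise (b - f u - M z) ∂ρ) * πprior u) * φ u := by
  set g : (Fin n → ℝ) → ℝ := fun u => ∫ z, πnoise (b - f u - M z) ∂ρ with hg
  set dens : (Fin n → ℝ) → ℝ := fun u => g u * πprior u with hdens
  have hgmeas : Measurable g := g_measurable πnoise hnoise_meas f M hf hM b ρ
  have hgnn : ∀ u, 0 ≤ g u := fun u =>
    le_trans hκ0.le (g_bounds κ hκ0 πnoise hnoise_meas hnoise_bnd f M hM b ρ u).1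
  have hgub : ∀ u, g u ≤ κ⁻¹ := fun u =>
    (g_bounds κ hκ0 πnoise hnoise_meas hnoise_bnd f M hM b ρ u).2
  have hdmeas : Measurable dens := hgmeas.mul hprior_meas
  have hdnn : ∀ u, 0 ≤ dens u := fun u => mul_nonneg (hgnn u) (hprior_nonneg u)
  have hdint : Integrable dens (volume : Measure (Fin n → ℝ)) := by
    refine weighted_integrable πprior hprior_meas hprior_nonneg hprior_int g hgmeas κ⁻¹ ?_
    intro u; rw [abs_of_nonneg (hgnn u)]; exact hgub u
  have hZ : ENNReal.ofReal (∫ u, dens u) = ∫⁻ u, ENNReal.ofReal (dens u) :=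
    ofReal_integral_eq_lintegral_ofReal hdint (Filter.Eventually.of_forall hdnn)
  have hPuniv : (Pmeas πprior πnoise f M b ρ) Set.univ = ENNReal.ofReal (∫ u, dens u) := by
    rw [Pmeas, withDensity_apply _ MeasurableSet.univ, Measure.restrict_univ, hZ]
  have hwd : ∫ x, φ x ∂(Pmeas πprior πnoise f M b ρ) = ∫ u, dens u * φ u := by
    have heq : Pmeas πprior πnoise f M b ρ =
        (volume : Measure (Fin n → ℝ)).withDensity
          (fun u => ((dens u).toNNReal : ENNReal)) := rfl
    rw [heq, integral_withDensity_eq_integral_smul hdmeas.real_toNNReal φ]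
    refine integral_congr_ae (Filter.Eventually.of_forall fun u => ?_)
    simp [NNReal.smul_def, Real.coe_toNNReal _ (hdnn u)]
  rw [Lmeas, hPuniv, integral_smul_measure, hwd, ENNReal.toReal_inv,
    ENNReal.toReal_ofReal (integral_nonneg hdnn), smul_eq_mul]

end Main

/-- If `κ ≤ π_noise(ε) ≤ κ⁻¹` for all `ε`, with `κ ∈ (0,1)`, then the one-step update `LP` of
the iterative model-error algorithm is Lipschitz with constant `2κ⁻³` on probability measures:
`d(LPμ, LPν) ≤ 2κ⁻³ d(μ, ν)`. -/
theorem stmt_17 {n J : ℕ} (κ : ℝ) (hκ0 : 0 < κ) (hκ1 : κ < 1)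
    (πprior : (Fin n → ℝ) → ℝ) (hprior_meas : Measurable πprior)
    (hprior_nonneg : ∀ u, 0 ≤ πprior u)
    (hprior_int : ∫⁻ u, ENNReal.ofReal (πprior u) = 1)
    (πnoise : (Fin J → ℝ) → ℝ) (hnoise_meas : Measurable πnoise)
    (hnoise_bnd : ∀ ε, κ ≤ πnoise ε ∧ πnoise ε ≤ κ⁻¹)
    (f M : (Fin n → ℝ) → (Fin J → ℝ)) (hf : Measurable f) (hM : Measurable M)
    (b : Fin J → ℝ)
    (μ ν : Measure (Fin n → ℝ)) [IsProbabilityMeasure μ] [IsProbabilityMeasure ν] :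
    dmeas (Lmeas (Pmeas πprior πnoise f M b μ)) (Lmeas (Pmeas πprior πnoise f M b ν)) ≤
      2 * (κ ^ 3)⁻¹ * dmeas μ ν := by
  have hκinv1 : 1 ≤ κ⁻¹ := (one_le_inv₀ hκ0).mpr hκ1.le
  have hd0 : 0 ≤ dmeas μ ν := dmeas_nonneg μ ν
  set d := dmeas μ ν with hdv
  -- notation
  set gμ : (Fin n → ℝ) → ℝ := fun u => ∫ z, πnoise (b - f u - M z) ∂μ with hgμ
  set gν : (Fin n → ℝ) → ℝ := fun u => ∫ z, πnoise (b - f u - M z) ∂ν with hgν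
  have hgμmeas : Measurable gμ := g_measurable πnoise hnoise_meas f M hf hM b μ
  have hgνmeas : Measurable gν := g_measurable πnoise hnoise_meas f M hf hM b ν
  have hgμbnd := fun u => g_bounds κ hκ0 πnoise hnoise_meas hnoise_bnd f M hM b μ u
  have hgνbnd := fun u => g_bounds κ hκ0 πnoise hnoise_meas hnoise_bnd f M hM b ν u
  have hπint := prior_integrable πprior hprior_meas hprior_nonneg hprior_int
  have hπone := prior_integral_one πprior hprior_meas hprior_nonneg hprior_int
  -- pointwise estimate on gμ - gν
  have hgd : ∀ u, |gμ u - gν u| ≤ κ⁻¹ * d := by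
    intro u
    have hmem : |(∫ z, κ * πnoise (b - f u - M z) ∂μ) -
        (∫ z, κ * πnoise (b - f u - M z) ∂ν)| ≤ d := by
      refine dmeas_ge μ ν _ ((hnoise_meas.comp (measurable_const.sub hM)).const_mul κ) ?_
      intro z
      rw [abs_of_nonneg (mul_nonneg hκ0.le (le_trans hκ0.le (hnoise_bnd _).1))]
      calc κ * πnoise (b - f u - M z) ≤ κ * κ⁻¹ :=
            mul_le_mul_of_nonneg_left (hnoise_bnd _).2 hκ0.le
        _ = 1 := mul_inv_cancel₀ hκ0.ne'
    rw [integral_const_mul, integral_const_mul, ← mul_sub, abs_mul, abs_of_pos hκ0] at hmem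
    have h2 := mul_le_mul_of_nonneg_left hmem (inv_nonneg.mpr hκ0.le)
    rwa [← mul_assoc, inv_mul_cancel₀ hκ0.ne', one_mul] at h2
  -- generic integral estimate
  have est : ∀ (ψ : (Fin n → ℝ) → ℝ), Measurable ψ → (∀ u, |ψ u| ≤ 1) →
      |(∫ u, (gμ u * πprior u) * ψ u) - ∫ u, (gν u * πprior u) * ψ u| ≤ κ⁻¹ * d := by
    intro ψ hψm hψb
    have hμint : Integrable (fun u => (gμ u * ψ u) * πprior u) volume := by
      refine weighted_integrable πprior hprior_meas hprior_nonneg hprior_int _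
        (hgμmeas.mul hψm) κ⁻¹ fun u => ?_
      rw [abs_mul]
      calc |gμ u| * |ψ u| ≤ κ⁻¹ * 1 := by
            refine mul_le_mul ?_ (hψb u) (abs_nonneg _) (inv_nonneg.mpr hκ0.le)
            rw [abs_of_nonneg (le_trans hκ0.le (hgμbnd u).1)]; exact (hgμbnd u).2
        _ = κ⁻¹ := mul_one _
    have hνint : Integrable (fun u => (gν u * ψ u) * πprior u) volume := by
      refine weighted_integrable πprior hprior_meas hprior_nonneg hprior_int _
        (hgνmeas.mul hψm) κ⁻¹ fun u => ?_
      rw [abs_mul]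
      calc |gν u| * |ψ u| ≤ κ⁻¹ * 1 := by
            refine mul_le_mul ?_ (hψb u) (abs_nonneg _) (inv_nonneg.mpr hκ0.le)
            rw [abs_of_nonneg (le_trans hκ0.le (hgνbnd u).1)]; exact (hgνbnd u).2
        _ = κ⁻¹ := mul_one _
    have hre : ∀ (g : (Fin n → ℝ) → ℝ),
        (∫ u, (g u * πprior u) * ψ u) = ∫ u, (g u * ψ u) * πprior u := by
      intro g; exact integral_congr_ae (Filter.Eventually.of_forall fun u => by ring)
    rw [hre gμ, hre gν, ← integral_sub hμint hνint]
    calc |∫ u, ((gμ u * ψ u) * πprior u - (gν u * ψ u) * πprior u)|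
        ≤ ∫ u, |(gμ u * ψ u) * πprior u - (gν u * ψ u) * πprior u| := by
          simpa only [Real.norm_eq_abs] using
            norm_integral_le_integral_norm (μ := (volume : Measure (Fin n → ℝ)))
              (fun u => (gμ u * ψ u) * πprior u - (gν u * ψ u) * πprior u)
      _ ≤ ∫ u, (κ⁻¹ * d) * πprior u := by
          refine integral_mono (hμint.sub hνint).abs (hπint.const_mul _) fun u => ?_
          have heq : (gμ u * ψ u) * πprior u - (gν u * ψ u) * πprior u =
              ((gμ u - gν u) * ψ u) * πprior u := by ring
          rw [heq, abs_mul, abs_mul, abs_of_nonneg (hprior_nonneg u)]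
          refine mul_le_mul_of_nonneg_right ?_ (hprior_nonneg u)
          calc |gμ u - gν u| * |ψ u| ≤ (κ⁻¹ * d) * 1 :=
                mul_le_mul (hgd u) (hψb u) (abs_nonneg _)
                  (mul_nonneg (inv_nonneg.mpr hκ0.le) hd0)
            _ = κ⁻¹ * d := mul_one _
      _ = κ⁻¹ * d := by rw [integral_const_mul, hπone, mul_one]
  -- the quantities
  set Zμ : ℝ := ∫ u, gμ u * πprior u with hZμ
  set Zν : ℝ := ∫ u, gν u * πprior u with hZν
  -- bounds on Z
  have hρμint : Integrable (fun u => gμ u * πprior u) volume := by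
    refine weighted_integrable πprior hprior_meas hprior_nonneg hprior_int _ hgμmeas κ⁻¹
      fun u => ?_
    rw [abs_of_nonneg (le_trans hκ0.le (hgμbnd u).1)]; exact (hgμbnd u).2
  have hρνint : Integrable (fun u => gν u * πprior u) volume := by
    refine weighted_integrable πprior hprior_meas hprior_nonneg hprior_int _ hgνmeas κ⁻¹
      fun u => ?_
    rw [abs_of_nonneg (le_trans hκ0.le (hgνbnd u).1)]; exact (hgνbnd u).2
  have hZbnd : ∀ (g : (Fin n → ℝ) → ℝ), Integrable (fun u => g u * πprior u) volume →
      (∀ u, κ ≤ g u ∧ g u ≤ κ⁻¹) → κ ≤ (∫ u, g u * πprior u) ∧ (∫ u, g u * πprior u) ≤ κ⁻¹ := by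
    intro g hint hbnd
    constructor
    · calc κ = ∫ u, κ * πprior u := by rw [integral_const_mul, hπone, mul_one]
        _ ≤ ∫ u, g u * πprior u := by
          refine integral_mono (hπint.const_mul κ) hint fun u => ?_
          exact mul_le_mul_of_nonneg_right (hbnd u).1 (hprior_nonneg u)
    · have step : (∫ u, g u * πprior u) ≤ ∫ u, κ⁻¹ * πprior u := by
        refine integral_mono hint (hπint.const_mul κ⁻¹) fun u => ?_
        exact mul_le_mul_of_nonneg_right (hbnd u).2 (hprior_nonneg u)
      have step2 : (∫ u, κ⁻¹ * πprior u) = κ⁻¹ := by rw [integral_const_mul, hπone, mul_one]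
      rw [← step2]; exact step
  have hZμbnd := hZbnd gμ hρμint hgμbnd
  have hZνbnd := hZbnd gν hρνint hgνbnd
  have hZμpos : 0 < Zμ := lt_of_lt_of_le hκ0 hZμbnd.1
  have hZνpos : 0 < Zν := lt_of_lt_of_le hκ0 hZνbnd.1
  have hZdiff : |Zμ - Zν| ≤ κ⁻¹ * d := by
    have := est (fun _ => 1) measurable_const (fun u => by simp)
    simpa using this
  -- final bound for each test function
  refine Real.sSup_le ?_ (by positivity)
  rintro r ⟨φ, hφm, hφb, rfl⟩
  rw [rep κ hκ0 πprior hprior_meas hprior_nonneg hprior_int πnoise hnoise_meas hnoise_bnd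
    f M hf hM b μ φ, rep κ hκ0 πprior hprior_meas hprior_nonneg hprior_int πnoise hnoise_meas
    hnoise_bnd f M hf hM b ν φ]
  set Iμ : ℝ := ∫ u, (gμ u * πprior u) * φ u with hIμ
  set Iν : ℝ := ∫ u, (gν u * πprior u) * φ u with hIν
  have hIdiff : |Iμ - Iν| ≤ κ⁻¹ * d := est φ hφm hφb
  have hIνbnd : |Iν| ≤ Zν := by
    have hint : Integrable (fun u => (gν u * πprior u) * φ u) volume := by
      refine weighted_integrable πprior hprior_meas hprior_nonneg hprior_int
        (fun u => gν u * φ u) (hgνmeas.mul hφm) κ⁻¹ (fun u => ?_) |>.congr ?_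
      · rw [abs_mul]
        calc |gν u| * |φ u| ≤ κ⁻¹ * 1 := by
              refine mul_le_mul ?_ (hφb u) (abs_nonneg _) (inv_nonneg.mpr hκ0.le)
              rw [abs_of_nonneg (le_trans hκ0.le (hgνbnd u).1)]; exact (hgνbnd u).2
          _ = κ⁻¹ := mul_one _
      · exact Filter.Eventually.of_forall fun u => by ring
    calc |Iν| ≤ ∫ u, |(gν u * πprior u) * φ u| := by
          simpa only [Real.norm_eq_abs] using
            norm_integral_le_integral_norm (μ := (volume : Measure (Fin n → ℝ)))
              (fun u => (gν u * πprior u) * φ u)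
      _ ≤ ∫ u, gν u * πprior u := by
          refine integral_mono hint.abs hρνint fun u => ?_
          rw [abs_mul, abs_of_nonneg (mul_nonneg (le_trans hκ0.le (hgνbnd u).1)
            (hprior_nonneg u))]
          calc (gν u * πprior u) * |φ u| ≤ (gν u * πprior u) * 1 :=
                mul_le_mul_of_nonneg_left (hφb u)
                  (mul_nonneg (le_trans hκ0.le (hgνbnd u).1) (hprior_nonneg u))
            _ = gν u * πprior u := mul_one _
  -- algebra
  have e : Zμ⁻¹ * Iμ - Zν⁻¹ * Iν = (Zν * Iμ - Zμ * Iν) / (Zμ * Zν) := by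
    field_simp
  rw [e, abs_div, abs_of_pos (mul_pos hZμpos hZνpos),
    div_le_iff₀ (mul_pos hZμpos hZνpos)]
  have h1 : |Zν * Iμ - Zμ * Iν| ≤ 2 * Zν * (κ⁻¹ * d) := by
    have e2 : Zν * Iμ - Zμ * Iν = Zν * (Iμ - Iν) + (Zν - Zμ) * Iν := by ring
    rw [e2]
    calc |Zν * (Iμ - Iν) + (Zν - Zμ) * Iν| ≤ |Zν * (Iμ - Iν)| + |(Zν - Zμ) * Iν| :=
          abs_add_le _ _
      _ ≤ Zν * (κ⁻¹ * d) + (κ⁻¹ * d) * Zν := by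
          refine add_le_add ?_ ?_
          · rw [abs_mul, abs_of_pos hZνpos]
            exact mul_le_mul_of_nonneg_left hIdiff hZνpos.le
          · rw [abs_mul]
            refine mul_le_mul ?_ hIνbnd (abs_nonneg _)
              (mul_nonneg (inv_nonneg.mpr hκ0.le) hd0)
            rw [abs_sub_comm]; exact hZdiff
      _ = 2 * Zν * (κ⁻¹ * d) := by ring
  refine h1.trans ?_
  -- 2 * Zν * (κ⁻¹ * d) ≤ 2 * (κ^3)⁻¹ * d * (Zμ * Zν)
  have hk3 : (κ ^ 3)⁻¹ = κ⁻¹ * κ⁻¹ * κ⁻¹ := by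
    rw [show κ ^ 3 = κ * κ * κ by ring, mul_inv, mul_inv]
  have hone : 1 ≤ κ⁻¹ * κ⁻¹ * Zμ := by
    have h2 : κ⁻¹ * κ⁻¹ * κ ≤ κ⁻¹ * κ⁻¹ * Zμ :=
      mul_le_mul_of_nonneg_left hZμbnd.1 (by positivity)
    have h3 : κ⁻¹ * κ⁻¹ * κ = κ⁻¹ := by field_simp
    nlinarith [hκinv1]
  have base : 0 ≤ 2 * Zν * (κ⁻¹ * d) := by positivity
  calc 2 * Zν * (κ⁻¹ * d) = 2 * Zν * (κ⁻¹ * d) * 1 := (mul_one _).symm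
    _ ≤ 2 * Zν * (κ⁻¹ * d) * (κ⁻¹ * κ⁻¹ * Zμ) := by
        exact mul_le_mul_of_nonneg_left hone base
    _ = 2 * (κ⁻¹ * κ⁻¹ * κ⁻¹) * d * (Zμ * Zν) := by ring
    _ = 2 * (κ ^ 3)⁻¹ * d * (Zμ * Zν) := by rw [hk3]
end
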